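/- arXiv:2201.09918 — 5 statements merged into one kernel-verified Lean document; each statement's English description precedes it below -/
import Mathlib

section
/- Let Y be a nonnegative random variable. Then for every positive integer n, E[Y^n] ≤ 2^n (n^n + (log E[exp(Y)])^n), provided E[exp(Y)] < ∞. -/
/-!
Put `a = log E[e^Y] ≥ 0`. Pointwise, either `Y ≤ 2a`, so `Y^n ≤ (2a)^n`, or `Y/2 ≤ Y - a`, and then
the exponential series gives `(Y/2)^n ≤ n! e^{Y/2} ≤ n! e^{Y-a}`. Since `E[e^{Y-a}] = 1`, integrating
yields `E[Y^n] ≤ 2^n (a^n + n!)`, and `n! ≤ n^n`.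
-/

open MeasureTheory Real
open scoped Nat

lemma pow_le_two_pow_mul_add_factorial_mul_exp_sub {y a : ℝ} (hy : 0 ≤ y) (ha : 0 ≤ a) (n : ℕ) :
    y ^ n ≤ 2 ^ n * (a ^ n + n ! * exp (y - a)) := by
  have h_fact_exp : 0 ≤ (n ! : ℝ) * exp (y - a) := by positivity
  rcases le_or_gt y (2 * a) with hle | hgt
  · calc y ^ n ≤ (2 * a) ^ n := pow_le_pow_left₀ hy hle n
      _ ≤ 2 ^ n * (a ^ n + n ! * exp (y - a)) := by
        rw [mul_pow]; gcongr; linarith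
  · have h_half : (y / 2) ^ n ≤ n ! * exp (y - a) := by
      calc (y / 2) ^ n ≤ n ! * exp (y / 2) :=
            (div_le_iff₀' (by positivity)).mp (pow_div_factorial_le_exp _ (by positivity) n)
        _ ≤ n ! * exp (y - a) := by gcongr; linarith
    calc y ^ n = 2 ^ n * (y / 2) ^ n := by rw [← mul_pow, mul_div_cancel₀ _ two_ne_zero]
      _ ≤ 2 ^ n * (a ^ n + n ! * exp (y - a)) := by
        gcongr; linarith [pow_nonneg ha n]

section Moments

variable {Ω : Type*} [MeasurableSpace Ω] {P : Measure Ω} {Y : Ω → ℝ}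

lemma integrable_pow_of_integrable_exp_of_nonneg (hpos : ∀ ω, 0 ≤ Y ω)
    (hInt : Integrable (fun ω => exp (Y ω)) P) (n : ℕ) :
    Integrable (fun ω => Y ω ^ n) P := by
  have hY : AEStronglyMeasurable Y P :=
    (aemeasurable_of_aemeasurable_exp hInt.aemeasurable).aestronglyMeasurable
  refine (hInt.const_mul (n ! : ℝ)).mono' (hY.pow n) (Filter.Eventually.of_forall fun ω => ?_)
  rw [norm_of_nonneg (pow_nonneg (hpos ω) n)]
  exact (div_le_iff₀' (by positivity)).mp (pow_div_factorial_le_exp _ (hpos ω) n)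

variable [IsProbabilityMeasure P]

lemma one_le_integral_exp_of_nonneg (hpos : ∀ ω, 0 ≤ Y ω)
    (hInt : Integrable (fun ω => exp (Y ω)) P) :
    1 ≤ ∫ ω, exp (Y ω) ∂P := by
  calc (1 : ℝ) = ∫ _ω, (1 : ℝ) ∂P := by simp
    _ ≤ ∫ ω, exp (Y ω) ∂P :=
      integral_mono (integrable_const 1) hInt fun ω => one_le_exp (hpos ω)

lemma integral_pow_le_of_integrable_exp (hpos : ∀ ω, 0 ≤ Y ω)
    (hInt : Integrable (fun ω => exp (Y ω)) P) {a : ℝ} (ha : 0 ≤ a) (n : ℕ) :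
    ∫ ω, Y ω ^ n ∂P ≤ 2 ^ n * (a ^ n + n ! * exp (-a) * ∫ ω, exp (Y ω) ∂P) := by
  have h_exp_sub : ∀ ω, exp (Y ω - a) = exp (-a) * exp (Y ω) := fun ω => by
    rw [← exp_add, neg_add_eq_sub]
  have h_bound : Integrable (fun ω => 2 ^ n * (a ^ n + n ! * exp (Y ω - a))) P := by
    simp_rw [h_exp_sub]
    exact ((integrable_const _).add ((hInt.const_mul _).const_mul _)).const_mul _
  calc ∫ ω, Y ω ^ n ∂P ≤ ∫ ω, 2 ^ n * (a ^ n + n ! * exp (Y ω - a)) ∂P :=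
        integral_mono (integrable_pow_of_integrable_exp_of_nonneg hpos hInt n) h_bound
          fun ω => pow_le_two_pow_mul_add_factorial_mul_exp_sub (hpos ω) ha n
    _ = 2 ^ n * (a ^ n + n ! * exp (-a) * ∫ ω, exp (Y ω) ∂P) := by
        simp_rw [h_exp_sub]
        rw [integral_const_mul, integral_add (integrable_const _)
          ((hInt.const_mul _).const_mul _), integral_const, integral_const_mul,
          integral_const_mul]
        simp [mul_assoc]

end Moments

theorem stmt_6_general {Ω : Type*} [MeasurableSpace Ω] (P : Measure Ω) [IsProbabilityMeasure P]
    (Y : Ω → ℝ) (hpos : ∀ ω, 0 ≤ Y ω)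
    (hInt : Integrable (fun ω => Real.exp (Y ω)) P)
    (n : ℕ) :
    ∫ ω, (Y ω) ^ n ∂P
      ≤ 2 ^ n * ((n : ℝ) ^ n + (Real.log (∫ ω, Real.exp (Y ω) ∂P)) ^ n) := by
  have h_one := one_le_integral_exp_of_nonneg hpos hInt
  have h_log : exp (-log (∫ ω, exp (Y ω) ∂P)) * ∫ ω, exp (Y ω) ∂P = 1 := by
    rw [exp_neg, exp_log (by linarith), inv_mul_cancel₀ (by linarith)]
  have h_fact : (n ! : ℝ) ≤ (n : ℝ) ^ n := by exact_mod_cast Nat.factorial_le_pow n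
  calc ∫ ω, Y ω ^ n ∂P
      ≤ 2 ^ n * ((log (∫ ω, exp (Y ω) ∂P)) ^ n
          + n ! * exp (-log (∫ ω, exp (Y ω) ∂P)) * ∫ ω, exp (Y ω) ∂P) :=
        integral_pow_le_of_integrable_exp hpos hInt (log_nonneg h_one) n
    _ ≤ 2 ^ n * ((n : ℝ) ^ n + (log (∫ ω, exp (Y ω) ∂P)) ^ n) := by
        rw [mul_assoc _ (exp _), h_log, mul_one, add_comm]
        gcongr

/-- For a nonnegative random variable Y with E[e^Y] < ∞ and any n ≥ 1,
E[Yⁿ] ≤ 2ⁿ (nⁿ + (log E[e^Y])ⁿ). -/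
theorem stmt_6 {Ω : Type*} [MeasurableSpace Ω] (P : Measure Ω) [IsProbabilityMeasure P]
    (Y : Ω → ℝ) (hpos : ∀ ω, 0 ≤ Y ω)
    (hInt : Integrable (fun ω => Real.exp (Y ω)) P)
    (n : ℕ) (hn : 1 ≤ n) :
    ∫ ω, (Y ω) ^ n ∂P
      ≤ 2 ^ n * ((n : ℝ) ^ n + (Real.log (∫ ω, Real.exp (Y ω) ∂P)) ^ n) :=
  stmt_6_general P Y hpos hInt n
end

section
/- Let M₁ and M₂ be N×N real symmetric matrices with rank(M₁ − M₂) = r, and let f: ℝ → ℝ be a continuous function of bounded variation. Then |∫ f dμ_{M₁} − ∫ f dμ_{M₂}| ≤ (r/N)·‖f‖_BV, where μ_{M_i} denotes the empirical spectral distribution of M_i (the uniform measure on its eigenvalues, with multiplicity). -/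
/-!
Write `λ₁ ≤ … ≤ λ_N` and `μ₁ ≤ … ≤ μ_N` for the sorted eigenvalues of `M₁` and `M₂`. The subspace
spanned by the eigenvectors of `M₂` with eigenvalue `≤ x`, the one spanned by the eigenvectors of
`M₁` with eigenvalue `> x`, and `ker (M₁ - M₂)` meet only in `0`: on the intersection the quadratic
forms of `M₁` and `M₂` agree, yet one is `≤ x‖v‖²` and the other `> x‖v‖²`. Counting dimensions,
the eigenvalue counting functions of `M₁` and `M₂` differ by at most `r` at every `x`, so the sorted
spectra interlace with shift `r`: `μᵢ ≤ λ_{i+r}` and `λᵢ ≤ μ_{i+r}`. Hence along each residue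
class of indices modulo `r` the intervals between `λᵢ` and `μᵢ` follow each other without
overlapping, and each class contributes at most the total variation of `f`.
-/

open Matrix Module Submodule Finset

section BoundedVariation

variable {α E ι : Type*} [LinearOrder α] [LinearOrder ι]

theorem eVariationOn.sum_le_biUnion [PseudoEMetricSpace E] (f : α → E) (s : Finset ι)
    (S : ι → Set α) (hS : ∀ i ∈ s, ∀ j ∈ s, i < j → ∀ x ∈ S i, ∀ y ∈ S j, x ≤ y) :
    ∑ i ∈ s, eVariationOn f (S i) ≤ eVariationOn f (⋃ i ∈ s, S i) := by
  induction s using Finset.induction_on_max with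
  | empty => simp
  | insert j s hj ih =>
    have hS' : ∀ i ∈ s, ∀ k ∈ s, i < k → ∀ x ∈ S i, ∀ y ∈ S k, x ≤ y :=
      fun i hi k hk => hS i (mem_insert_of_mem hi) k (mem_insert_of_mem hk)
    rw [sum_insert fun h => (hj j h).false, Finset.set_biUnion_insert, add_comm, Set.union_comm]
    refine (add_le_add_left (ih hS') _).trans (eVariationOn.add_le_union f ?_)
    simp only [Set.mem_iUnion]
    rintro x ⟨i, hi, hx⟩ y hy
    exact hS i (mem_insert_of_mem hi) j (mem_insert_self j s) (hj i hi) x hx y hy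

theorem eVariationOn.sum_edist_le [PseudoEMetricSpace E] (f : α → E) (s : Finset ι)
    (g h : ι → α) (hgh : ∀ i ∈ s, ∀ j ∈ s, i < j → max (g i) (h i) ≤ min (g j) (h j)) :
    ∑ i ∈ s, edist (f (g i)) (f (h i)) ≤ eVariationOn f Set.univ :=
  calc ∑ i ∈ s, edist (f (g i)) (f (h i))
      ≤ ∑ i ∈ s, eVariationOn f (Set.Icc (min (g i) (h i)) (max (g i) (h i))) :=
        sum_le_sum fun _ _ => eVariationOn.edist_le f ⟨min_le_left _ _, le_max_left _ _⟩
          ⟨min_le_right _ _, le_max_right _ _⟩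
    _ ≤ eVariationOn f (⋃ i ∈ s, Set.Icc (min (g i) (h i)) (max (g i) (h i))) :=
        eVariationOn.sum_le_biUnion f s _ fun i hi j hj hij _ hx _ hy =>
          hx.2.trans ((hgh i hi j hj hij).trans hy.1)
    _ ≤ eVariationOn f Set.univ := eVariationOn.mono f (Set.subset_univ _)

theorem BoundedVariationOn.sum_dist_le [PseudoMetricSpace E] {f : α → E}
    (hf : BoundedVariationOn f Set.univ) (s : Finset ι) (g h : ι → α)
    (hgh : ∀ i ∈ s, ∀ j ∈ s, i < j → max (g i) (h i) ≤ min (g j) (h j)) :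
    ∑ i ∈ s, dist (f (g i)) (f (h i)) ≤ (eVariationOn f Set.univ).toReal := by
  simp only [dist_edist]
  rw [← ENNReal.toReal_sum fun _ _ => edist_ne_top _ _]
  exact ENNReal.toReal_mono hf (eVariationOn.sum_edist_le f s g h hgh)

end BoundedVariation

theorem Submodule.finrank_add_finrank_add_finrank_le {K V : Type*} [DivisionRing K]
    [AddCommGroup V] [Module K V] [FiniteDimensional K V] {U₁ U₂ U₃ : Submodule K V}
    (h : U₁ ⊓ U₂ ⊓ U₃ = ⊥) :
    finrank K U₁ + finrank K U₂ + finrank K U₃ ≤ 2 * finrank K V := by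
  have h₁₂ := finrank_sup_add_finrank_inf_eq U₁ U₂
  have h₁₂₃ := finrank_sup_add_finrank_inf_eq (U₁ ⊓ U₂) U₃
  rw [h, finrank_bot, add_zero] at h₁₂₃
  have := (U₁ ⊔ U₂).finrank_le
  have := (U₁ ⊓ U₂ ⊔ U₃).finrank_le
  omega

section Spectral

variable {E ι : Type*} [NormedAddCommGroup E] [InnerProductSpace ℝ E] [Fintype ι]
  (e : OrthonormalBasis ι ℝ E) {T : E →ₗ[ℝ] E} {c : ι → ℝ}

theorem OrthonormalBasis.repr_map_apply_of_eigen (hT : ∀ i, T (e i) = c i • e i) (v : E) (i : ι) :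
    e.repr (T v) i = c i * e.repr v i := by
  classical
  conv_lhs => rw [← e.sum_repr v]
  simp [map_sum, map_smul, hT, smul_smul, Pi.single_apply, mul_comm]

theorem OrthonormalBasis.inner_apply_self_sub_mul_norm_sq (hT : ∀ i, T (e i) = c i • e i)
    (v : E) (x : ℝ) :
    inner ℝ v (T v) - x * ‖v‖ ^ 2 = ∑ i, (c i - x) * e.repr v i ^ 2 := by
  rw [← e.repr.inner_map_map, ← e.repr.norm_map, EuclideanSpace.norm_sq_eq, PiLp.inner_apply,
    mul_sum, ← sum_sub_distrib]
  refine sum_congr rfl fun i _ => ?_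
  simp only [e.repr_map_apply_of_eigen hT, RCLike.inner_apply, Real.ringHom_apply, Real.norm_eq_abs,
    sq_abs]
  ring

theorem OrthonormalBasis.repr_eq_zero_of_mem_span {s : Set ι} {v : E}
    (hv : v ∈ span ℝ (e '' s)) {i : ι} (hi : i ∉ s) : e.repr v i = 0 := by
  rw [← e.coe_toBasis, Basis.mem_span_image] at hv
  rw [← e.coe_toBasis_repr_apply]
  by_contra h
  exact hi (hv (Finsupp.mem_support_iff.2 h))

theorem OrthonormalBasis.finrank_span_image (s : Finset ι) :
    finrank ℝ (span ℝ (e '' s)) = #s := by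
  rw [Set.image_eq_range]
  exact (finrank_span_eq_card
    (e.orthonormal.linearIndependent.comp _ Subtype.val_injective)).trans (Fintype.card_coe s)

theorem OrthonormalBasis.inner_apply_self_le (hT : ∀ i, T (e i) = c i • e i) {s : Set ι}
    {x : ℝ} (hs : ∀ i ∈ s, c i ≤ x) {v : E} (hv : v ∈ span ℝ (e '' s)) :
    inner ℝ v (T v) ≤ x * ‖v‖ ^ 2 := by
  rw [← sub_nonpos, e.inner_apply_self_sub_mul_norm_sq hT]
  refine sum_nonpos fun i _ => ?_
  by_cases hi : i ∈ s
  · exact mul_nonpos_of_nonpos_of_nonneg (sub_nonpos.2 (hs i hi)) (sq_nonneg _)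
  · simp [e.repr_eq_zero_of_mem_span hv hi]

theorem OrthonormalBasis.lt_inner_apply_self (hT : ∀ i, T (e i) = c i • e i) {s : Set ι}
    {x : ℝ} (hs : ∀ i ∈ s, x < c i) {v : E} (hv : v ∈ span ℝ (e '' s)) (hv₀ : v ≠ 0) :
    x * ‖v‖ ^ 2 < inner ℝ v (T v) := by
  have hterm : ∀ i, 0 ≤ (c i - x) * e.repr v i ^ 2 := fun i => by
    by_cases hi : i ∈ s
    · exact mul_nonneg (sub_nonneg.2 (hs i hi).le) (sq_nonneg _)
    · simp [e.repr_eq_zero_of_mem_span hv hi]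
  obtain ⟨i, hi⟩ : ∃ i, e.repr v i ≠ 0 := by
    by_contra! h
    exact hv₀ (e.repr.injective (by ext i; simp [h i]))
  have his : i ∈ s := by_contra fun his => hi (e.repr_eq_zero_of_mem_span hv his)
  rw [← sub_pos, e.inner_apply_self_sub_mul_norm_sq hT]
  exact sum_pos' (fun i _ => hterm i)
    ⟨i, mem_univ i, mul_pos (sub_pos.2 (hs i his)) (sq_pos_of_ne_zero hi)⟩

theorem LinearMap.card_eigenvalues_le_le_add_finrank_range [FiniteDimensional ℝ E]
    {S : E →ₗ[ℝ] E} {e' : OrthonormalBasis ι ℝ E} {d : ι → ℝ} (hS : ∀ i, S (e i) = c i • e i)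
    (hT : ∀ i, T (e' i) = d i • e' i) (x : ℝ) :
    #{i | d i ≤ x} ≤ #{i | c i ≤ x} + finrank ℝ (LinearMap.range (S - T)) := by
  set V := span ℝ (e' '' ↑({i | d i ≤ x} : Finset ι))
  set W := span ℝ (e '' ↑({i | ¬c i ≤ x} : Finset ι))
  have hVWK : V ⊓ W ⊓ LinearMap.ker (S - T) = ⊥ := by
    refine eq_bot_iff.2 fun v ⟨⟨hvV, hvW⟩, hvK⟩ => ?_
    rw [mem_bot]
    by_contra hv₀
    have hST : S v = T v := sub_eq_zero.1 hvK
    have hV := e'.inner_apply_self_le hT (x := x) (by simp) hvV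
    have hW := e.lt_inner_apply_self hS (fun i hi => by simpa using hi) hvW hv₀
    rw [hST] at hW
    exact hW.not_ge hV
  have hdim := finrank_add_finrank_add_finrank_le hVWK
  rw [e'.finrank_span_image, e.finrank_span_image] at hdim
  have hrank := (S - T).finrank_range_add_finrank_ker
  have hcard := card_filter_add_card_filter_not (s := univ) (fun i => c i ≤ x)
  rw [card_univ, ← finrank_eq_card_basis e.toBasis] at hcard
  omega

end Spectral

section Matrix

theorem Matrix.rank_neg {m n R : Type*} [Fintype n] [CommRing R] (A : Matrix m n R) :
    (-A).rank = A.rank := by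
  have : (-A).mulVecLin = -A.mulVecLin := LinearMap.ext fun v => Matrix.neg_mulVec v A
  rw [rank, this, LinearMap.range_neg, rank]

variable {n : Type*} [Fintype n] [DecidableEq n]

theorem Matrix.rank_eq_finrank_range_toEuclideanLin (A : Matrix n n ℝ) :
    A.rank = finrank ℝ (LinearMap.range (toEuclideanLin A)) := by
  rw [toEuclideanLin, toLpLin_eq_toLin]
  exact rank_eq_finrank_range_toLin A _ _

theorem Matrix.IsHermitian.toEuclideanLin_eigenvectorBasis {A : Matrix n n ℝ}
    (hA : A.IsHermitian) (i : n) :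
    toEuclideanLin A (hA.eigenvectorBasis i) = hA.eigenvalues i • hA.eigenvectorBasis i := by
  rw [toLpLin_apply, hA.mulVec_eigenvectorBasis]
  rfl

theorem Matrix.IsHermitian.card_eigenvalues_le_le_add_rank {A B : Matrix n n ℝ}
    (hA : A.IsHermitian) (hB : B.IsHermitian) (x : ℝ) :
    #{i | hB.eigenvalues i ≤ x} ≤ #{i | hA.eigenvalues i ≤ x} + (A - B).rank := by
  rw [rank_eq_finrank_range_toEuclideanLin, map_sub]
  exact LinearMap.card_eigenvalues_le_le_add_finrank_range _
    hA.toEuclideanLin_eigenvectorBasis hB.toEuclideanLin_eigenvectorBasis x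

end Matrix

section Interlacing

variable {N : ℕ}

theorem le_of_card_le_card_add {a b : Fin N → ℝ} (ha : Monotone a) (hb : Monotone b) {r : ℕ}
    (hcard : ∀ x, #{k | a k ≤ x} ≤ #{k | b k ≤ x} + r) {i j : Fin N} (hij : (i : ℕ) + r ≤ j) :
    b i ≤ a j := by
  by_contra! hlt
  have ha_le : (j : ℕ) + 1 ≤ #{k | a k ≤ a j} := by
    rw [← Fin.card_Iic]
    exact card_le_card fun k hk => mem_filter.2 ⟨mem_univ k, ha (mem_Iic.1 hk)⟩
  have hb_le : #{k | b k ≤ a j} ≤ i := by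
    rw [← Fin.card_Iio i]
    refine card_le_card fun k hk => mem_Iio.2 (lt_of_not_ge fun hik => ?_)
    exact (hlt.trans_le (hb hik)).not_ge (mem_filter.1 hk).2
  have := hcard (a j)
  omega

theorem sum_abs_sub_le_of_interlace {f : ℝ → ℝ} (hf : BoundedVariationOn f Set.univ)
    {a b : Fin N → ℝ} (ha : Monotone a) (hb : Monotone b) {r : ℕ}
    (hab : ∀ i j : Fin N, (i : ℕ) + r ≤ j → b i ≤ a j)
    (hba : ∀ i j : Fin N, (i : ℕ) + r ≤ j → a i ≤ b j) :
    ∑ i, |f (a i) - f (b i)| ≤ r * (eVariationOn f Set.univ).toReal := by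
  rcases Nat.eq_zero_or_pos r with rfl | hr
  · simp [le_antisymm (hba _ _ le_rfl) (hab _ _ le_rfl)]
  have hclass : ∀ c, ∑ i : Fin N with i.val % r = c, |f (a i) - f (b i)|
      ≤ (eVariationOn f Set.univ).toReal := by
    intro c
    simp only [← Real.dist_eq]
    refine hf.sum_dist_le _ a b fun i hi j hj hij => ?_
    simp only [mem_filter, mem_univ, true_and] at hi hj
    have hrj : (i : ℕ) + r ≤ j := by
      have hdvd : r ∣ (j : ℕ) - i :=
        Nat.dvd_of_mod_eq_zero (Nat.sub_mod_eq_zero_of_mod_eq (hj.trans hi.symm))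
      have := Nat.le_of_dvd (Nat.sub_pos_of_lt hij) hdvd
      omega
    exact max_le (le_min (ha hij.le) (hba i j hrj)) (le_min (hab i j hrj) (hb hij.le))
  calc ∑ i, |f (a i) - f (b i)|
      = ∑ c ∈ range r, ∑ i : Fin N with i.val % r = c, |f (a i) - f (b i)| :=
        (sum_fiberwise_of_maps_to (fun i _ => mem_range.2 (Nat.mod_lt _ hr)) _).symm
    _ ≤ ∑ _c ∈ range r, (eVariationOn f Set.univ).toReal := sum_le_sum fun c _ => hclass c
    _ = r * (eVariationOn f Set.univ).toReal := by simp

theorem abs_sum_sub_sum_le_of_card_le {f : ℝ → ℝ} (hf : BoundedVariationOn f Set.univ)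
    {c d : Fin N → ℝ} {r : ℕ} (hcd : ∀ x, #{i | c i ≤ x} ≤ #{i | d i ≤ x} + r)
    (hdc : ∀ x, #{i | d i ≤ x} ≤ #{i | c i ≤ x} + r) :
    |∑ i, f (c i) - ∑ i, f (d i)| ≤ r * (eVariationOn f Set.univ).toReal := by
  have hsort : ∀ (g : Fin N → ℝ) x, #{i | g (Tuple.sort g i) ≤ x} = #{i | g i ≤ x} :=
    fun g _ => card_equiv (Tuple.sort g) (by simp)
  rw [← Equiv.sum_comp (Tuple.sort c) (fun i => f (c i)),
    ← Equiv.sum_comp (Tuple.sort d) (fun i => f (d i)), ← sum_sub_distrib]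
  refine (abs_sum_le_sum_abs _ _).trans (sum_abs_sub_le_of_interlace hf
    (Tuple.monotone_sort c) (Tuple.monotone_sort d) (fun i j hij => ?_) (fun i j hij => ?_))
  · exact le_of_card_le_card_add (Tuple.monotone_sort c) (Tuple.monotone_sort d)
      (by simpa only [Function.comp_apply, hsort] using hcd) hij
  · exact le_of_card_le_card_add (Tuple.monotone_sort d) (Tuple.monotone_sort c)
      (by simpa only [Function.comp_apply, hsort] using hdc) hij

end Interlacing

theorem stmt_7_general {N : ℕ} (M₁ M₂ : Matrix (Fin N) (Fin N) ℝ)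
    (h₁ : M₁.IsHermitian) (h₂ : M₂.IsHermitian) (r : ℕ) (hr : (M₁ - M₂).rank = r)
    (f : ℝ → ℝ) (hBV : BoundedVariationOn f Set.univ) :
    |(1 / (N : ℝ)) * ∑ i, f (h₁.eigenvalues i)
      - (1 / (N : ℝ)) * ∑ i, f (h₂.eigenvalues i)|
      ≤ ((r : ℝ) / N) * (eVariationOn f Set.univ).toReal := by
  subst hr
  have hcount₁₂ := h₁.card_eigenvalues_le_le_add_rank h₂
  have hcount₂₁ := h₂.card_eigenvalues_le_le_add_rank h₁
  rw [← neg_sub, rank_neg] at hcount₂₁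
  have hsum := abs_sum_sub_sum_le_of_card_le hBV hcount₂₁ hcount₁₂
  calc |1 / (N : ℝ) * ∑ i, f (h₁.eigenvalues i) - 1 / (N : ℝ) * ∑ i, f (h₂.eigenvalues i)|
      = 1 / N * |∑ i, f (h₁.eigenvalues i) - ∑ i, f (h₂.eigenvalues i)| := by
        rw [← mul_sub, abs_mul, abs_of_nonneg (by positivity)]
    _ ≤ 1 / N * ((M₁ - M₂).rank * (eVariationOn f Set.univ).toReal) := by gcongr
    _ = (M₁ - M₂).rank / N * (eVariationOn f Set.univ).toReal := by ring

/-- rank inequality for empirical spectral distributions: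
|∫ f dμ_{M₁} − ∫ f dμ_{M₂}| ≤ (r/N)‖f‖_BV when rank(M₁ − M₂) = r. -/
theorem stmt_7 {N : ℕ} (hN : 0 < N) (M₁ M₂ : Matrix (Fin N) (Fin N) ℝ)
    (h₁ : M₁.IsHermitian) (h₂ : M₂.IsHermitian) (r : ℕ) (hr : (M₁ - M₂).rank = r)
    (f : ℝ → ℝ) (hf : Continuous f) (hBV : BoundedVariationOn f Set.univ) :
    |(1 / (N : ℝ)) * ∑ i, f (h₁.eigenvalues i)
      - (1 / (N : ℝ)) * ∑ i, f (h₂.eigenvalues i)|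
      ≤ ((r : ℝ) / N) * (eVariationOn f Set.univ).toReal :=
  stmt_7_general M₁ M₂ h₁ h₂ r hr f hBV
end

section
/- Fix γ > 0, an integer p ≥ 2, l ≥ 1, and nonnegative reals ζ_1,...,ζ_l and ξ_{k,r} for 1 ≤ k ≤ l, 1 ≤ r ≤ p−1. Define g: ℝ_+^{l(p−1)} → ℝ by g(y) = log(1 + ∑_{k=1}^l ζ_k² / (γ + ∑_{r=1}^{p−1} ξ_{k,r}² e^{−y_{k,r}})). Then g is differentiable and ∑_{k,r} |∂_{y_{k,r}} g(y)| ≤ χ/(γ + χ) for all y, where χ = ∑_{k=1}^l ζ_k². -/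
/-!
With `D_k = γ + ∑_r ξ_{k,r}² e^{-y_{k,r}}` and `S = ∑_k ζ_k² / D_k`, every partial derivative
`∂_{k,r} g = ζ_k² ξ_{k,r}² e^{-y_{k,r}} / ((1 + S) D_k²)` is nonnegative. Summing over `r` gives
`ζ_k² (D_k - γ) / ((1 + S) D_k²) ≤ (ζ_k² / D_k) / (1 + S)`, so the gradient has ℓ¹-norm at most
`S / (1 + S)`. Since `S ≤ χ / γ` and `t ↦ t / (1 + t)` is increasing, this is at most `χ / (γ + χ)`.
-/

open Finset Real

lemma div_one_add_le_div_add {s c γ : ℝ} (hγ : 0 < γ) (hs : 0 ≤ s) (hsc : s * γ ≤ c) :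
    s / (1 + s) ≤ c / (γ + c) := by
  rw [div_le_div_iff₀ (by linarith) (by nlinarith)]
  nlinarith

namespace LogRatioSum

variable {ι κ : Type*} [Fintype κ]

noncomputable def expSum (b y : ι × κ → ℝ) (k : ι) : ℝ :=
  ∑ r, b (k, r) * exp (-y (k, r))

noncomputable def ratioSum [Fintype ι] (γ : ℝ) (a : ι → ℝ) (b y : ι × κ → ℝ) : ℝ :=
  ∑ k, a k / (γ + expSum b y k)

noncomputable def ratioSumPartial (γ : ℝ) (a : ι → ℝ) (b y : ι × κ → ℝ) (i : ι × κ) : ℝ :=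
  a i.1 * (b i * exp (-y i)) / (γ + expSum b y i.1) ^ 2

local notation "coord" => ContinuousLinearMap.proj (R := ℝ) (φ := fun _ : ι × κ => ℝ)

variable {γ : ℝ} {a : ι → ℝ} {b : ι × κ → ℝ}

lemma expSum_nonneg (hb : ∀ i, 0 ≤ b i) (y : ι × κ → ℝ) (k : ι) : 0 ≤ expSum b y k :=
  sum_nonneg fun _ _ => mul_nonneg (hb _) (exp_pos _).le

lemma ratioSumPartial_nonneg (ha : ∀ k, 0 ≤ a k) (hb : ∀ i, 0 ≤ b i) (y : ι × κ → ℝ)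
    (i : ι × κ) : 0 ≤ ratioSumPartial γ a b y i :=
  div_nonneg (mul_nonneg (ha _) (mul_nonneg (hb i) (exp_pos _).le)) (sq_nonneg _)

variable [Fintype ι]

lemma hasFDerivAt_expSum (b y : ι × κ → ℝ) (k : ι) :
    HasFDerivAt (fun y => expSum b y k)
      (∑ r, (-(b (k, r) * exp (-y (k, r)))) • coord (k, r)) y := by
  unfold expSum
  refine HasFDerivAt.fun_sum fun r _ => ?_
  have h : HasFDerivAt (fun y : ι × κ → ℝ => y (k, r)) (coord (k, r)) y := hasFDerivAt_apply _ _
  refine (h.neg.exp.const_mul (b (k, r))).congr_fderiv ?_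
  ext v
  simp only [smul_apply, neg_apply, ContinuousLinearMap.proj_apply, smul_eq_mul, Pi.neg_apply]
  ring

lemma ratioSum_nonneg (hγ : 0 < γ) (ha : ∀ k, 0 ≤ a k) (hb : ∀ i, 0 ≤ b i)
    (y : ι × κ → ℝ) : 0 ≤ ratioSum γ a b y :=
  sum_nonneg fun k _ => div_nonneg (ha k) (by linarith [expSum_nonneg hb y k])

lemma hasFDerivAt_ratioSum (hγ : 0 < γ) (hb : ∀ i, 0 ≤ b i) (y : ι × κ → ℝ) :
    HasFDerivAt (ratioSum γ a b) (∑ i, ratioSumPartial γ a b y i • coord i) y := by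
  have hD : ∀ k, γ + expSum b y k ≠ 0 := fun k => by linarith [expSum_nonneg hb y k]
  have := HasFDerivAt.fun_sum (u := univ) fun k _ =>
    ((hasDerivAt_inv (hD k)).comp_hasFDerivAt y
      ((hasFDerivAt_expSum b y k).const_add γ)).const_mul (a k)
  refine this.congr_fderiv ?_
  ext v
  simp only [_root_.sum_apply, smul_apply, ContinuousLinearMap.proj_apply, smul_eq_mul,
    Fintype.sum_prod_type, mul_sum]
  exact sum_congr rfl fun k _ => sum_congr rfl fun r _ => by rw [ratioSumPartial]; ring

lemma sum_smul_coord_single [DecidableEq (ι × κ)] (c : ι × κ → ℝ) (i : ι × κ) :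
    (∑ j, c j • coord j) (Pi.single i 1) = c i := by
  simp [Pi.single_apply]

lemma sum_ratioSumPartial_le (hγ : 0 < γ) (ha : ∀ k, 0 ≤ a k) (hb : ∀ i, 0 ≤ b i)
    (y : ι × κ → ℝ) : ∑ i, ratioSumPartial γ a b y i ≤ ratioSum γ a b y := by
  rw [Fintype.sum_prod_type]
  refine sum_le_sum fun k _ => ?_
  have hE := expSum_nonneg hb y k
  have hD : 0 < γ + expSum b y k := by linarith
  calc ∑ r, ratioSumPartial γ a b y (k, r) = a k * expSum b y k / (γ + expSum b y k) ^ 2 := by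
        simp only [ratioSumPartial, expSum, ← sum_div, ← mul_sum]
    _ ≤ a k * (γ + expSum b y k) / (γ + expSum b y k) ^ 2 := by
        gcongr
        · exact ha k
        · linarith
    _ = a k / (γ + expSum b y k) := by field_simp

lemma ratioSum_le (hγ : 0 < γ) (ha : ∀ k, 0 ≤ a k) (hb : ∀ i, 0 ≤ b i) (y : ι × κ → ℝ) :
    ratioSum γ a b y ≤ (∑ k, a k) / γ := by
  rw [ratioSum, sum_div]
  exact sum_le_sum fun k _ =>
    div_le_div_of_nonneg_left (ha k) hγ (le_add_of_nonneg_right (expSum_nonneg hb y k))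

lemma hasFDerivAt_log_one_add_ratioSum (hγ : 0 < γ) (ha : ∀ k, 0 ≤ a k) (hb : ∀ i, 0 ≤ b i)
    (y : ι × κ → ℝ) :
    HasFDerivAt (fun y => log (1 + ratioSum γ a b y))
      (∑ i, ((1 + ratioSum γ a b y)⁻¹ * ratioSumPartial γ a b y i) • coord i) y := by
  have hS : 1 + ratioSum γ a b y ≠ 0 := by linarith [ratioSum_nonneg hγ ha hb y]
  refine (((hasFDerivAt_ratioSum hγ hb y).const_add 1).log hS).congr_fderiv ?_
  simp only [smul_sum, smul_smul]

lemma differentiable_log_one_add_ratioSum (hγ : 0 < γ) (ha : ∀ k, 0 ≤ a k)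
    (hb : ∀ i, 0 ≤ b i) : Differentiable ℝ fun y => log (1 + ratioSum γ a b y) :=
  fun y => (hasFDerivAt_log_one_add_ratioSum hγ ha hb y).differentiableAt

lemma sum_abs_fderiv_log_one_add_ratioSum_le [DecidableEq (ι × κ)] (hγ : 0 < γ)
    (ha : ∀ k, 0 ≤ a k) (hb : ∀ i, 0 ≤ b i) (y : ι × κ → ℝ) :
    ∑ i, |fderiv ℝ (fun y => log (1 + ratioSum γ a b y)) y (Pi.single i 1)|
      ≤ (∑ k, a k) / (γ + ∑ k, a k) := by
  rw [(hasFDerivAt_log_one_add_ratioSum hγ ha hb y).fderiv]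
  simp only [sum_smul_coord_single]
  have hS := ratioSum_nonneg hγ ha hb y
  calc ∑ i, |(1 + ratioSum γ a b y)⁻¹ * ratioSumPartial γ a b y i|
        = (∑ i, ratioSumPartial γ a b y i) / (1 + ratioSum γ a b y) := by
          rw [div_eq_inv_mul, mul_sum]
          exact sum_congr rfl fun i _ =>
            abs_of_nonneg (mul_nonneg (by positivity) (ratioSumPartial_nonneg ha hb y i))
    _ ≤ ratioSum γ a b y / (1 + ratioSum γ a b y) := by
          gcongr
          exact sum_ratioSumPartial_le hγ ha hb y
    _ ≤ (∑ k, a k) / (γ + ∑ k, a k) :=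
          div_one_add_le_div_add hγ hS ((le_div_iff₀ hγ).1 (ratioSum_le hγ ha hb y))

end LogRatioSum

theorem stmt_10_general (γ : ℝ) (hγ : 0 < γ) (p l : ℕ)
    (ζ : Fin l → ℝ) (ξ : Fin l × Fin (p - 1) → ℝ) :
    let g : (Fin l × Fin (p - 1) → ℝ) → ℝ := fun y =>
      Real.log (1 + ∑ k : Fin l,
        (ζ k) ^ 2 / (γ + ∑ r : Fin (p - 1), (ξ (k, r)) ^ 2 * Real.exp (-(y (k, r)))))
    Differentiable ℝ g ∧
      ∀ y : Fin l × Fin (p - 1) → ℝ, (∀ i, 0 ≤ y i) →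
        ∑ i : Fin l × Fin (p - 1), |fderiv ℝ g y (Pi.single i 1)|
          ≤ (∑ k : Fin l, (ζ k) ^ 2) / (γ + ∑ k : Fin l, (ζ k) ^ 2) := by
  have ha : ∀ k, 0 ≤ ζ k ^ 2 := fun k => sq_nonneg _
  have hb : ∀ i, 0 ≤ ξ i ^ 2 := fun i => sq_nonneg _
  intro g
  have hg : g = fun y => log (1 + LogRatioSum.ratioSum γ (fun k => ζ k ^ 2) (fun i => ξ i ^ 2) y) := rfl
  rw [hg]
  exact ⟨LogRatioSum.differentiable_log_one_add_ratioSum hγ ha hb,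
    fun y _ => LogRatioSum.sum_abs_fderiv_log_one_add_ratioSum_le hγ ha hb y⟩

/-- the function g(y) = log(1 + ∑_k ζ_k²/(γ + ∑_r ξ_{k,r}² e^{−y_{k,r}}))
is differentiable, and its gradient ℓ¹-norm is bounded by χ/(γ+χ) where χ = ∑_k ζ_k². -/
theorem stmt_10 (γ : ℝ) (hγ : 0 < γ) (p l : ℕ) (hp : 2 ≤ p) (hl : 1 ≤ l)
    (ζ : Fin l → ℝ) (ξ : Fin l × Fin (p - 1) → ℝ)
    (hζ : ∀ k, 0 ≤ ζ k) (hξ : ∀ i, 0 ≤ ξ i) :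
    let g : (Fin l × Fin (p - 1) → ℝ) → ℝ := fun y =>
      Real.log (1 + ∑ k : Fin l,
        (ζ k) ^ 2 / (γ + ∑ r : Fin (p - 1), (ξ (k, r)) ^ 2 * Real.exp (-(y (k, r)))))
    Differentiable ℝ g ∧
      ∀ y : Fin l × Fin (p - 1) → ℝ, (∀ i, 0 ≤ y i) →
        ∑ i : Fin l × Fin (p - 1), |fderiv ℝ g y (Pi.single i 1)|
          ≤ (∑ k : Fin l, (ζ k) ^ 2) / (γ + ∑ k : Fin l, (ζ k) ^ 2) :=
  stmt_10_general γ hγ p l ζ ξ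
end

section
/- Let F: [−λ, λ] → ℝ be a convex differentiable function, and let G: [−λ, λ] → ℝ be convex differentiable with the same domain. Then |F'(0) − G'(0)| ≤ (1/λ)(|F(λ)−G(λ)| + |F(−λ)−G(−λ)| + |F(0)−G(0)|) + (G'(λ) − G'(−λ)). -/
/-!
A convex differentiable function lies above its tangent lines. At `0` this squeezes `F'(0)`
and `G'(0)` between the secant slopes over `[-λ, 0]` and `[0, λ]`, so `F'(0) - G'(0)` is
controlled by the differences `F - G` at `-λ, 0, λ` plus the gap between the two secant slopes
of `G`; the tangents of `G` at `±λ` bound that gap by `G'(λ) - G'(-λ)`.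
-/

open Set

theorem ConvexOn.add_mul_sub_le_of_hasDerivWithinAt {s : Set ℝ} {f : ℝ → ℝ} {f' x y : ℝ}
    (hf : ConvexOn ℝ s f) (hx : x ∈ s) (hy : y ∈ s) (hf' : HasDerivWithinAt f f' s x) :
    f x + f' * (y - x) ≤ f y := by
  rcases lt_trichotomy x y with hxy | rfl | hyx
  · have h := hf.le_slope_of_hasDerivWithinAt hx hy hxy hf'
    rw [slope_def_field, le_div_iff₀ (sub_pos.2 hxy)] at h
    linarith
  · simp
  · have h := hf.slope_le_of_hasDerivWithinAt hy hx hyx hf'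
    rw [slope_def_field, div_le_iff₀ (sub_pos.2 hyx)] at h
    linarith

/-- convexity interpolation lemma:
|F'(0) − G'(0)| ≤ (1/λ)(|F(λ)−G(λ)| + |F(−λ)−G(−λ)| + |F(0)−G(0)|) + (G'(λ) − G'(−λ)). -/
theorem stmt_14 (lam : ℝ) (hlam : 0 < lam) (F G F' G' : ℝ → ℝ)
    (hF : ConvexOn ℝ (Set.Icc (-lam) lam) F) (hG : ConvexOn ℝ (Set.Icc (-lam) lam) G)
    (hF' : ∀ t ∈ Set.Icc (-lam) lam, HasDerivWithinAt F (F' t) (Set.Icc (-lam) lam) t)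
    (hG' : ∀ t ∈ Set.Icc (-lam) lam, HasDerivWithinAt G (G' t) (Set.Icc (-lam) lam) t) :
    |F' 0 - G' 0|
      ≤ (1 / lam) * (|F lam - G lam| + |F (-lam) - G (-lam)| + |F 0 - G 0|)
        + (G' lam - G' (-lam)) := by
  have h0 : (0 : ℝ) ∈ Icc (-lam) lam := ⟨by linarith, hlam.le⟩
  have hr : lam ∈ Icc (-lam) lam := ⟨by linarith, le_rfl⟩
  have hl : -lam ∈ Icc (-lam) lam := ⟨le_rfl, by linarith⟩
  have tangentF {x y} (hx : x ∈ Icc (-lam) lam) (hy : y ∈ Icc (-lam) lam) :=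
    hF.add_mul_sub_le_of_hasDerivWithinAt hx hy (hF' x hx)
  have tangentG {x y} (hx : x ∈ Icc (-lam) lam) (hy : y ∈ Icc (-lam) lam) :=
    hG.add_mul_sub_le_of_hasDerivWithinAt hx hy (hG' x hx)
  have key : |lam * (F' 0 - G' 0)|
      ≤ |F lam - G lam| + |F (-lam) - G (-lam)| + |F 0 - G 0| + lam * (G' lam - G' (-lam)) := by
    refine abs_le.2 ⟨?_, ?_⟩ <;>
      linarith [tangentF h0 hr, tangentF h0 hl, tangentG h0 hr, tangentG h0 hl, tangentG hr h0,
        tangentG hl h0, le_abs_self (F lam - G lam), neg_le_abs (F lam - G lam),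
        le_abs_self (F (-lam) - G (-lam)), neg_le_abs (F (-lam) - G (-lam)),
        le_abs_self (F 0 - G 0), neg_le_abs (F 0 - G 0)]
  rw [abs_mul, abs_of_pos hlam] at key
  rw [one_div_mul_eq_div, div_add' _ _ _ hlam.ne', le_div_iff₀ hlam]
  linarith
end

section
/- Let D and E be n×n real symmetric matrices and ζ ∈ ℝ^n, β > 0, where D is diagonal with diagonal entries ≥ 1 and 2βζζ^T + D + E is invertible with ‖(2βζζ^T + D + E)^{-1}‖ ≤ 1. Then |ζ^T(2βζζ^T + D + E)^{-1}ζ − ζ^T(2βζζ^T + D)^{-1}ζ| ≤ ‖ζ‖² ‖E‖, and moreover 1 − 2βζ^T(2βζζ^T + D)^{-1}ζ = 1/(1 + 2βζ^T D^{-1}ζ). -/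
/-!
With `A = 2βζζᵀ + D` and `D ⪰ I`, one has `vᵀv ≤ vᵀAv`; hence `A` is invertible and
`‖A⁻¹v‖ ≤ ‖v‖` (from `‖A⁻¹v‖² ≤ ⟨A⁻¹v, v⟩`). The resolvent identity
`A⁻¹ - (A + E)⁻¹ = A⁻¹E(A + E)⁻¹` and the symmetry of `A` turn the difference of the two
quadratic forms into `⟨A⁻¹ζ, E(A + E)⁻¹ζ⟩`, which Cauchy–Schwarz bounds by `‖ζ‖ · e‖ζ‖`.
For the identity, `x = A⁻¹ζ` solves `Dx = (1 - 2β⟨ζ, x⟩)ζ`, so `t = ⟨ζ, x⟩` satisfies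
`t = (1 - 2βt)⟨ζ, D⁻¹ζ⟩`, i.e. `(1 - 2βt)(1 + 2β⟨ζ, D⁻¹ζ⟩) = 1`.
-/

open Matrix

section DotProduct

variable {ι R : Type*} [Fintype ι] [CommRing R] [LinearOrder R] [IsStrictOrderedRing R]

theorem dotProduct_self_nonneg (v : ι → R) : 0 ≤ v ⬝ᵥ v :=
  Finset.sum_nonneg fun i _ => mul_self_nonneg (v i)

theorem dotProduct_sq_le_dotProduct_self_mul_dotProduct_self (u v : ι → R) :
    (u ⬝ᵥ v) ^ 2 ≤ (u ⬝ᵥ u) * (v ⬝ᵥ v) := by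
  simpa only [dotProduct, sq] using Finset.sum_mul_sq_le_sq_mul_sq Finset.univ u v

theorem abs_dotProduct_le_of_dotProduct_self_le {u v : ι → R} {a b : R}
    (hu : u ⬝ᵥ u ≤ a ^ 2) (hv : v ⬝ᵥ v ≤ b ^ 2) (ha : 0 ≤ a) (hb : 0 ≤ b) :
    |u ⬝ᵥ v| ≤ a * b := by
  refine abs_le_of_sq_le_sq ?_ (mul_nonneg ha hb)
  calc (u ⬝ᵥ v) ^ 2 ≤ (u ⬝ᵥ u) * (v ⬝ᵥ v) :=
        dotProduct_sq_le_dotProduct_self_mul_dotProduct_self u v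
    _ ≤ a ^ 2 * b ^ 2 := mul_le_mul hu hv (dotProduct_self_nonneg v) (sq_nonneg a)
    _ = (a * b) ^ 2 := (mul_pow a b 2).symm

end DotProduct

section Field

variable {ι K : Type*} [Fintype ι] [DecidableEq ι] [Field K]

theorem mulVec_inv_mulVec {A : Matrix ι ι K} (hA : IsUnit A.det)
    (v : ι → K) : A *ᵥ (A⁻¹ *ᵥ v) = v := by
  rw [mulVec_mulVec, mul_nonsing_inv A hA, one_mulVec]

theorem inv_mulVec_mulVec {A : Matrix ι ι K} (hA : IsUnit A.det)
    (v : ι → K) : A⁻¹ *ᵥ (A *ᵥ v) = v := by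
  rw [mulVec_mulVec, nonsing_inv_mul A hA, one_mulVec]

theorem one_sub_mul_dotProduct_smul_vecMulVec_add_inv_mulVec {D : Matrix ι ι K}
    (hD : IsUnit D.det) (c : K) (u v : ι → K) (hA : IsUnit (c • vecMulVec u v + D).det) :
    1 - c * (v ⬝ᵥ (c • vecMulVec u v + D)⁻¹ *ᵥ u) = 1 / (1 + c * (v ⬝ᵥ D⁻¹ *ᵥ u)) := by
  set x := (c • vecMulVec u v + D)⁻¹ *ᵥ u
  set t := v ⬝ᵥ x
  have hDx : D *ᵥ x = (1 - c * t) • u := by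
    have hAx := mulVec_inv_mulVec hA u
    rw [add_mulVec, smul_mulVec, vecMulVec_mulVec, op_smul_eq_smul, smul_smul] at hAx
    rw [sub_smul, one_smul]
    exact eq_sub_of_add_eq' hAx
  have hx : x = (1 - c * t) • D⁻¹ *ᵥ u := by
    rw [← mulVec_smul, ← hDx, inv_mulVec_mulVec hD]
  have ht : t = (1 - c * t) * (v ⬝ᵥ D⁻¹ *ᵥ u) := by
    change v ⬝ᵥ x = _
    rw [hx, dotProduct_smul, smul_eq_mul]
  -- The product being 1 also rules out the junk value `1 / 0`.
  refine eq_one_div_of_mul_eq_one_left ?_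
  linear_combination -c * ht

end Field

section OrderedField

variable {ι K : Type*} [Fintype ι] [DecidableEq ι] [Field K] [LinearOrder K]
  [IsStrictOrderedRing K]

theorem isUnit_det_of_dotProduct_self_le {A : Matrix ι ι K}
    (hA : ∀ v, v ⬝ᵥ v ≤ v ⬝ᵥ (A *ᵥ v)) : IsUnit A.det := by
  refine isUnit_iff_ne_zero.mpr fun hdet => ?_
  obtain ⟨v, hv, hAv⟩ := exists_mulVec_eq_zero_iff.mpr hdet
  have hvv := hA v
  rw [hAv, dotProduct_zero] at hvv
  exact hv (dotProduct_self_eq_zero.mp (hvv.antisymm (dotProduct_self_nonneg v)))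

theorem inv_mulVec_dotProduct_self_le {A : Matrix ι ι K}
    (hA : ∀ v, v ⬝ᵥ v ≤ v ⬝ᵥ (A *ᵥ v)) (v : ι → K) :
    (A⁻¹ *ᵥ v) ⬝ᵥ (A⁻¹ *ᵥ v) ≤ v ⬝ᵥ v := by
  set x := A⁻¹ *ᵥ v
  have hxv : x ⬝ᵥ x ≤ x ⬝ᵥ v := by
    simpa only [x, mulVec_inv_mulVec (isUnit_det_of_dotProduct_self_le hA)] using hA x
  nlinarith [dotProduct_sq_le_dotProduct_self_mul_dotProduct_self x v,
    dotProduct_self_nonneg x, dotProduct_self_nonneg v]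

theorem le_dotProduct_smul_vecMulVec_add_diagonal_mulVec {c : K} (hc : 0 ≤ c) {d : ι → K}
    (hd : ∀ i, 1 ≤ d i) (ζ v : ι → K) :
    v ⬝ᵥ v ≤ v ⬝ᵥ ((c • vecMulVec ζ ζ + diagonal d) *ᵥ v) := by
  have hrank_one : 0 ≤ v ⬝ᵥ ((c • vecMulVec ζ ζ) *ᵥ v) := by
    rw [smul_mulVec, vecMulVec_mulVec, op_smul_eq_smul, smul_smul, dotProduct_smul,
      smul_eq_mul, dotProduct_comm v ζ, mul_assoc]
    exact mul_nonneg hc (mul_self_nonneg _)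
  have hdiag : v ⬝ᵥ v ≤ v ⬝ᵥ (diagonal d *ᵥ v) := by
    simp only [dotProduct, mulVec_diagonal]
    exact Finset.sum_le_sum fun i _ => by nlinarith [mul_self_nonneg (v i), hd i]
  rw [add_mulVec, dotProduct_add]
  linarith

end OrderedField

theorem abs_dotProduct_inv_add_mulVec_sub_le {ι : Type*} [Fintype ι] [DecidableEq ι]
    {A E : Matrix ι ι ℝ} (hA : A.IsSymm) (hAdet : IsUnit A.det) (hAEdet : IsUnit (A + E).det)
    {ζ : ι → ℝ} (hAζ : (A⁻¹ *ᵥ ζ) ⬝ᵥ (A⁻¹ *ᵥ ζ) ≤ ζ ⬝ᵥ ζ)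
    (hAEζ : ((A + E)⁻¹ *ᵥ ζ) ⬝ᵥ ((A + E)⁻¹ *ᵥ ζ) ≤ ζ ⬝ᵥ ζ) {e : ℝ} (he : 0 ≤ e)
    (hE : ∀ v, (E *ᵥ v) ⬝ᵥ (E *ᵥ v) ≤ e ^ 2 * (v ⬝ᵥ v)) :
    |ζ ⬝ᵥ (A + E)⁻¹ *ᵥ ζ - ζ ⬝ᵥ A⁻¹ *ᵥ ζ| ≤ (ζ ⬝ᵥ ζ) * e := by
  set y := (A + E)⁻¹ *ᵥ ζ
  have hresolvent : A⁻¹ - (A + E)⁻¹ = A⁻¹ * E * (A + E)⁻¹ := by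
    rw [inv_sub_inv (by simp only [isUnit_iff_isUnit_det, hAdet, hAEdet]),
      add_sub_cancel_left]
  have hdiff : ζ ⬝ᵥ A⁻¹ *ᵥ ζ - ζ ⬝ᵥ (A + E)⁻¹ *ᵥ ζ = (A⁻¹ *ᵥ ζ) ⬝ᵥ (E *ᵥ y) := by
    rw [← dotProduct_sub, ← sub_mulVec, hresolvent, ← mulVec_mulVec, ← mulVec_mulVec,
      dotProduct_mulVec, ← mulVec_transpose, hA.inv.eq]
  have hζ := dotProduct_self_nonneg ζ
  have hEy : (E *ᵥ y) ⬝ᵥ (E *ᵥ y) ≤ (e * √(ζ ⬝ᵥ ζ)) ^ 2 := by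
    rw [mul_pow, Real.sq_sqrt hζ]
    exact (hE y).trans (mul_le_mul_of_nonneg_left hAEζ (sq_nonneg e))
  have hx : (A⁻¹ *ᵥ ζ) ⬝ᵥ (A⁻¹ *ᵥ ζ) ≤ √(ζ ⬝ᵥ ζ) ^ 2 := by rwa [Real.sq_sqrt hζ]
  calc |ζ ⬝ᵥ (A + E)⁻¹ *ᵥ ζ - ζ ⬝ᵥ A⁻¹ *ᵥ ζ| = |(A⁻¹ *ᵥ ζ) ⬝ᵥ (E *ᵥ y)| := by
        rw [abs_sub_comm, hdiff]
    _ ≤ √(ζ ⬝ᵥ ζ) * (e * √(ζ ⬝ᵥ ζ)) := abs_dotProduct_le_of_dotProduct_self_le hx hEy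
        (Real.sqrt_nonneg _) (mul_nonneg he (Real.sqrt_nonneg _))
    _ = (ζ ⬝ᵥ ζ) * e := by rw [mul_left_comm, Real.mul_self_sqrt hζ, mul_comm]

theorem stmt_15_general {n : ℕ} (β : ℝ) (hβ : 0 < β) (d : Fin n → ℝ) (hd : ∀ i, 1 ≤ d i)
    (E : Matrix (Fin n) (Fin n) ℝ) (ζ : Fin n → ℝ)
    (hInv :
      IsUnit ((2 * β) • Matrix.vecMulVec ζ ζ + Matrix.diagonal d + E).det)
    (hOp : ∀ v : Fin n → ℝ,
      (((2 * β) • Matrix.vecMulVec ζ ζ + Matrix.diagonal d + E)⁻¹ *ᵥ v) ⬝ᵥ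
          (((2 * β) • Matrix.vecMulVec ζ ζ + Matrix.diagonal d + E)⁻¹ *ᵥ v)
        ≤ v ⬝ᵥ v)
    (e : ℝ) (he : 0 ≤ e)
    (hEnorm : ∀ v : Fin n → ℝ, (E *ᵥ v) ⬝ᵥ (E *ᵥ v) ≤ e ^ 2 * (v ⬝ᵥ v)) :
    |ζ ⬝ᵥ ((2 * β) • Matrix.vecMulVec ζ ζ + Matrix.diagonal d + E)⁻¹ *ᵥ ζ
        - ζ ⬝ᵥ ((2 * β) • Matrix.vecMulVec ζ ζ + Matrix.diagonal d)⁻¹ *ᵥ ζ|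
      ≤ (ζ ⬝ᵥ ζ) * e ∧
    1 - 2 * β * (ζ ⬝ᵥ ((2 * β) • Matrix.vecMulVec ζ ζ + Matrix.diagonal d)⁻¹ *ᵥ ζ)
      = 1 / (1 + 2 * β * (ζ ⬝ᵥ (Matrix.diagonal d)⁻¹ *ᵥ ζ)) := by
  have hcoercive :=
    le_dotProduct_smul_vecMulVec_add_diagonal_mulVec (by positivity : 0 ≤ 2 * β) hd ζ
  have hAsymm : ((2 * β) • vecMulVec ζ ζ + diagonal d).IsSymm :=
    ((show (vecMulVec ζ ζ).IsSymm from transpose_vecMulVec ζ ζ).smul _).add (isSymm_diagonal d)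
  have hD : IsUnit (diagonal d).det := by
    rw [det_diagonal]
    exact (Finset.prod_pos fun i _ => one_pos.trans_le (hd i)).ne'.isUnit
  have hAdet := isUnit_det_of_dotProduct_self_le hcoercive
  exact ⟨abs_dotProduct_inv_add_mulVec_sub_le hAsymm hAdet hInv
      (inv_mulVec_dotProduct_self_le hcoercive ζ) (hOp ζ) he hEnorm,
    one_sub_mul_dotProduct_smul_vecMulVec_add_inv_mulVec hD _ ζ ζ hAdet⟩

/-- perturbation bound and Sherman–Morrison identity for quadratic
forms: |ζᵀ(2βζζᵀ+D+E)⁻¹ζ − ζᵀ(2βζζᵀ+D)⁻¹ζ| ≤ ‖ζ‖²‖E‖, and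
1 − 2βζᵀ(2βζζᵀ+D)⁻¹ζ = 1/(1 + 2βζᵀD⁻¹ζ).  Operator norms are expressed via
quadratic-form bounds on the ℓ² norm. -/
theorem stmt_15 {n : ℕ} (β : ℝ) (hβ : 0 < β) (d : Fin n → ℝ) (hd : ∀ i, 1 ≤ d i)
    (E : Matrix (Fin n) (Fin n) ℝ) (hE : E.IsSymm) (ζ : Fin n → ℝ)
    (hInv :
      IsUnit ((2 * β) • Matrix.vecMulVec ζ ζ + Matrix.diagonal d + E).det)
    (hOp : ∀ v : Fin n → ℝ,
      (((2 * β) • Matrix.vecMulVec ζ ζ + Matrix.diagonal d + E)⁻¹ *ᵥ v) ⬝ᵥ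
          (((2 * β) • Matrix.vecMulVec ζ ζ + Matrix.diagonal d + E)⁻¹ *ᵥ v)
        ≤ v ⬝ᵥ v)
    (e : ℝ) (he : 0 ≤ e)
    (hEnorm : ∀ v : Fin n → ℝ, (E *ᵥ v) ⬝ᵥ (E *ᵥ v) ≤ e ^ 2 * (v ⬝ᵥ v)) :
    |ζ ⬝ᵥ ((2 * β) • Matrix.vecMulVec ζ ζ + Matrix.diagonal d + E)⁻¹ *ᵥ ζ
        - ζ ⬝ᵥ ((2 * β) • Matrix.vecMulVec ζ ζ + Matrix.diagonal d)⁻¹ *ᵥ ζ|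
      ≤ (ζ ⬝ᵥ ζ) * e ∧
    1 - 2 * β * (ζ ⬝ᵥ ((2 * β) • Matrix.vecMulVec ζ ζ + Matrix.diagonal d)⁻¹ *ᵥ ζ)
      = 1 / (1 + 2 * β * (ζ ⬝ᵥ (Matrix.diagonal d)⁻¹ *ᵥ ζ)) :=
  stmt_15_general β hβ d hd E ζ hInv hOp e he hEnorm
end
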